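/- arXiv:0907.3275 — 5 statements merged into one kernel-verified Lean document; each statement's English description precedes it below -/
import Mathlib

section
/- Let q > 0 and let f : ℝ → ℝ be weakly increasing (a < b implies f(a) ≤ f(b)). If P is a q-exchangeable Borel probability measure on ℝ^ℕ, then the pushforward of P under the coordinatewise map f^∞ : ℝ^ℕ → ℝ^ℕ, (w_1, w_2, ...) ↦ (f(w_1), f(w_2), ...), is again q-exchangeable. -/
open MeasureTheory

/-- The map on sequences that swaps coordinates `i` and `i+1`. -/
def swapCoord {α : Type*} (i : ℕ) (w : ℕ → α) : ℕ → α :=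
  fun j => if j = i then w (i + 1) else if j = i + 1 then w i else w j

/-- A Borel probability measure `P` on `ℝ^ℕ` is `q`-exchangeable if for every `i` the
pushforward of `P` under the swap of coordinates `i` and `i+1` equals the measure with
density `w ↦ q ^ sgn (w (i+1) - w i)` with respect to `P`. -/
def IsQExchangeable (q : ℝ) (P : Measure (ℕ → ℝ)) : Prop :=
  ∀ i : ℕ, P.map (swapCoord i) =
    P.withDensity (fun w => ENNReal.ofReal (q ^ ((SignType.sign (w (i + 1) - w i)) : ℤ)))

/-!
Write `σ` for the swap of coordinates `i, i+1`, `F = f^∞` and `g w = q ^ sgn (w (i+1) - w i)`.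
Since `F ∘ σ = σ ∘ F`, exchangeability of `F_* P` at a set `A` amounts to
`∫_B g dP = ∫_B g ∘ F dP` for `B = F⁻¹ A`. Off the set `C` where `f` identifies the two
coordinates, monotonicity of `f` gives `g ∘ F = g`; on `C` we have `g ∘ F = 1`. The set `B ∩ C`
is `σ`-invariant (on `C`, `F ∘ σ = F`), so `∫_{B ∩ C} g dP = (σ_* P)(B ∩ C) = P(B ∩ C)`.
-/

section swapCoord

variable {α β : Type*} {i : ℕ}

lemma swapCoord_comp (f : α → β) (w : ℕ → α) : swapCoord i (f ∘ w) = f ∘ swapCoord i w := by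
  funext j
  simp only [swapCoord, Function.comp_apply]
  split_ifs <;> rfl

lemma swapCoord_eq_self {w : ℕ → α} (h : w i = w (i + 1)) : swapCoord i w = w := by
  funext j
  simp only [swapCoord]
  split_ifs with h₁ h₂
  · rw [h₁, h]
  · rw [h₂, h]
  · rfl

@[simp]
lemma swapCoord_apply_self (w : ℕ → α) : swapCoord i w i = w (i + 1) := by
  simp [swapCoord]

@[simp]
lemma swapCoord_apply_succ (w : ℕ → α) : swapCoord i w (i + 1) = w i := by
  simp [swapCoord]

lemma measurable_swapCoord [MeasurableSpace α] (i : ℕ) :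
    Measurable (swapCoord i : (ℕ → α) → ℕ → α) := by
  refine measurable_pi_lambda _ fun j => ?_
  unfold swapCoord
  split_ifs <;> exact measurable_pi_apply _

end swapCoord

lemma Measurable.comp_left {ι α β : Type*} [MeasurableSpace α] [MeasurableSpace β] {f : α → β}
    (hf : Measurable f) : Measurable fun w : ι → α => f ∘ w :=
  measurable_pi_lambda _ fun j => hf.comp (measurable_pi_apply j)

noncomputable def qSignDensity (q : ℝ) (i : ℕ) (w : ℕ → ℝ) : ENNReal :=
  ENNReal.ofReal (q ^ ((SignType.sign (w (i + 1) - w i)) : ℤ))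

lemma isQExchangeable_iff {q : ℝ} {P : Measure (ℕ → ℝ)} :
    IsQExchangeable q P ↔ ∀ i, P.map (swapCoord i) = P.withDensity (qSignDensity q i) :=
  Iff.rfl

lemma measurable_qSignDensity (q : ℝ) (i : ℕ) : Measurable (qSignDensity q i) := by
  have hcast : Monotone fun s : SignType => (s : ℤ) := by
    intro a b h
    revert h
    cases a <;> cases b <;> decide
  have hsign : Measurable fun x : ℝ => (SignType.sign x : ℤ) :=
    (hcast.comp SignType.sign.monotone).measurable
  exact (Measurable.of_discrete (f := fun n : ℤ => ENNReal.ofReal (q ^ n))).comp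
    (hsign.comp (by fun_prop))

lemma qSignDensity_eq_one {q : ℝ} {i : ℕ} {w : ℕ → ℝ} (h : w i = w (i + 1)) :
    qSignDensity q i w = 1 := by
  simp [qSignDensity, h]

lemma Monotone.sign_sub_eq {α β : Type*} [AddCommGroup α] [LinearOrder α] [IsOrderedAddMonoid α]
    [AddCommGroup β] [LinearOrder β] [IsOrderedAddMonoid β] {f : α → β} (hf : Monotone f) {a b : α}
    (h : f a ≠ f b) :
    SignType.sign (f b - f a) = SignType.sign (b - a) := by
  rcases lt_trichotomy a b with hab | rfl | hab
  · rw [sign_pos (sub_pos.2 hab), sign_pos (sub_pos.2 ((hf hab.le).lt_of_ne h))]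
  · exact absurd rfl h
  · rw [sign_neg (sub_neg.2 hab), sign_neg (sub_neg.2 ((hf hab.le).lt_of_ne' h))]

lemma qSignDensity_comp_of_ne {q : ℝ} {i : ℕ} {f : ℝ → ℝ} (hf : Monotone f) {w : ℕ → ℝ}
    (h : f (w i) ≠ f (w (i + 1))) : qSignDensity q i (f ∘ w) = qSignDensity q i w := by
  simp only [qSignDensity, Function.comp_apply, hf.sign_sub_eq h]

lemma setLIntegral_eq_of_map_eq_withDensity {Ω : Type*} [MeasurableSpace Ω] {P : Measure Ω}
    {σ : Ω → Ω} {g : Ω → ENNReal} (hσ : Measurable σ) (h : P.map σ = P.withDensity g)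
    {E : Set Ω} (hE : MeasurableSet E) (hσE : σ ⁻¹' E = E) :
    ∫⁻ w in E, g w ∂P = P E := by
  rw [← withDensity_apply _ hE, ← h, Measure.map_apply hσ hE, hσE]

lemma setLIntegral_qSignDensity_comp {q : ℝ} {i : ℕ} {f : ℝ → ℝ} (hf : Monotone f)
    {P : Measure (ℕ → ℝ)} (hP : P.map (swapCoord i) = P.withDensity (qSignDensity q i))
    {A : Set (ℕ → ℝ)} (hA : MeasurableSet A) :
    ∫⁻ w in (fun w => f ∘ w) ⁻¹' A, qSignDensity q i (f ∘ w) ∂P =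
      ∫⁻ w in (fun w => f ∘ w) ⁻¹' A, qSignDensity q i w ∂P := by
  set B := (fun w : ℕ → ℝ => f ∘ w) ⁻¹' A
  set C := {w : ℕ → ℝ | f (w i) = f (w (i + 1))}
  have hB : MeasurableSet B := hf.measurable.comp_left hA
  have hC : MeasurableSet C := measurableSet_eq_fun
    (hf.measurable.comp (measurable_pi_apply i)) (hf.measurable.comp (measurable_pi_apply _))
  have hσ : swapCoord i ⁻¹' (B ∩ C) = B ∩ C := by
    ext w
    simp only [Set.mem_inter_iff, Set.mem_preimage, Set.mem_ofPred_eq, B, C,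
      swapCoord_apply_self, swapCoord_apply_succ, ← swapCoord_comp]
    constructor
    · rintro ⟨hwA, hw⟩
      rw [swapCoord_eq_self (by simpa using hw.symm)] at hwA
      exact ⟨hwA, hw.symm⟩
    · rintro ⟨hwA, hw⟩
      rw [swapCoord_eq_self (by simpa using hw)]
      exact ⟨hwA, hw.symm⟩
  rw [← lintegral_inter_add_sdiff _ B hC, ← lintegral_inter_add_sdiff _ B hC]
  congr 1
  · rw [setLIntegral_eq_of_map_eq_withDensity (measurable_swapCoord i) hP (hB.inter hC) hσ,
      ← setLIntegral_one]
    exact setLIntegral_congr_fun (hB.inter hC) fun w hw => qSignDensity_eq_one hw.2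
  · exact setLIntegral_congr_fun (hB.diff hC) fun w hw => qSignDensity_comp_of_ne hf hw.2

theorem stmt_1_general (q : ℝ) (f : ℝ → ℝ) (hf : ∀ a b : ℝ, a < b → f a ≤ f b)
    (P : Measure (ℕ → ℝ)) (hP : IsQExchangeable q P) :
    IsQExchangeable q (P.map (fun w => f ∘ w)) := by
  have hmono : Monotone f := monotone_iff_forall_lt.2 fun a b => hf a b
  have hF := hmono.measurable.comp_left (ι := ℕ)
  rw [isQExchangeable_iff] at hP ⊢
  intro i
  ext A hA
  have hσ := measurable_swapCoord (α := ℝ) i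
  rw [Measure.map_apply hσ hA, Measure.map_apply hF (hσ hA), withDensity_apply _ hA,
    setLIntegral_map hA (measurable_qSignDensity q i) hF,
    setLIntegral_qSignDensity_comp hmono (hP i) hA, ← withDensity_apply _ (hF hA), ← hP i,
    Measure.map_apply hσ (hF hA)]
  congr 1
  ext w
  simp only [Set.mem_preimage, swapCoord_comp]

/-- the coordinatewise application of a weakly increasing function `f : ℝ → ℝ`
preserves `q`-exchangeability. -/
theorem stmt_1 (q : ℝ) (hq : 0 < q) (f : ℝ → ℝ) (hf : ∀ a b : ℝ, a < b → f a ≤ f b)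
    (P : Measure (ℕ → ℝ)) [IsProbabilityMeasure P] (hP : IsQExchangeable q P) :
    IsQExchangeable q (P.map (fun w => f ∘ w)) :=
  stmt_1_general q f hf P hP
end

section
/- Let q > 0, let A and B be finite subsets of ℝ, and let f : A → B be weakly increasing (a < b implies f(a) ≤ f(b)). If P is a finitely q-exchangeable probability measure on A^n, then the pushforward of P under the coordinatewise map f^n : A^n → B^n, (w_1, ..., w_n) ↦ (f(w_1), ..., f(w_n)), is finitely q-exchangeable on B^n. -/
open MeasureTheory

/-- The map on words of length `n` that swaps coordinates `a` and `b`. -/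
def finSwap {α : Type*} {n : ℕ} (a b : Fin n) (w : Fin n → α) : Fin n → α :=
  fun j => if j = a then w b else if j = b then w a else w j

/-- Finite `q`-exchangeability for a probability measure on `A^n`, `A ⊆ ℝ`. -/
def IsFinQExchangeableOn (q : ℝ) (A : Set ℝ) {n : ℕ} (P : Measure (Fin n → A)) : Prop :=
  ∀ (i : ℕ) (h : i + 1 < n),
    P.map (finSwap ⟨i, Nat.lt_of_succ_lt h⟩ ⟨i + 1, h⟩) =
      P.withDensity (fun u => ENNReal.ofReal
        (q ^ ((SignType.sign ((u ⟨i + 1, h⟩ : ℝ) - (u ⟨i, Nat.lt_of_succ_lt h⟩ : ℝ))) : ℤ)))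

/-!
The swap `σ` of two adjacent letters commutes with `f^n`, so the pushforward of `P.map σ = g • P`
under `f^n` is the pushforward of `g • P`, and it suffices to compare `g` with `h ∘ f^n`, where
`g` and `h` are the densities `q^{sgn(u_{i+1} - u_i)}` on `A^n` and on `B^n`. Where `f` separates
the two letters, monotonicity of `f` makes the two signs, hence the densities, agree. The remaining
set `D` of words is invariant under `σ`, and so is its intersection with any preimage under `f^n`; on a
`σ`-invariant set `S` one has `∫_S g dP = P(σ⁻¹ S) = P(S)`, which is the mass of `h ∘ f^n = 1` on `S`.
-/

section Pushforward

variable {X Y : Type*} [MeasurableSpace X] [MeasurableSpace Y] {P : Measure X}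
  {σ : X → X} {g : X → ENNReal}

theorem setLIntegral_eq_measure_of_map_eq_withDensity (hσ : Measurable σ)
    (hP : P.map σ = P.withDensity g) {S : Set X} (hS : MeasurableSet S) (hSσ : σ ⁻¹' S = S) :
    ∫⁻ x in S, g x ∂P = P S := by
  rw [← withDensity_apply _ hS, ← hP, Measure.map_apply hσ hS, hSσ]

theorem map_map_eq_withDensity_of_semiconj {τ : Y → Y} {F : X → Y} {h : Y → ENNReal} {D : Set X}
    (hσ : Measurable σ) (hτ : Measurable τ) (hF : Measurable F) (hh : Measurable h)
    (hD : MeasurableSet D) (hP : P.map σ = P.withDensity g) (hFσ : τ ∘ F = F ∘ σ)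
    (hσD : σ ⁻¹' D = D) (hFD : ∀ x ∈ D, F (σ x) = F x) (hhD : ∀ x ∈ D, h (F x) = 1)
    (hgD : ∀ x ∉ D, g x = h (F x)) :
    (P.map F).map τ = (P.map F).withDensity h := by
  ext s hs
  have hT : MeasurableSet (F ⁻¹' s) := hF hs
  have hinv : σ ⁻¹' (F ⁻¹' s ∩ D) = F ⁻¹' s ∩ D := by
    ext x
    have hxD : σ x ∈ D ↔ x ∈ D := Set.ext_iff.mp hσD x
    simp only [Set.mem_preimage, Set.mem_inter_iff, hxD]
    constructor <;> rintro ⟨hx, hD⟩ <;> simpa [hFD x hD, hD] using hx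
  calc (P.map F).map τ s = P.map σ (F ⁻¹' s) := by
        rw [Measure.map_map hτ hF, hFσ, ← Measure.map_map hF hσ, Measure.map_apply hF hs]
    _ = ∫⁻ x in F ⁻¹' s ∩ D, g x ∂P + ∫⁻ x in F ⁻¹' s \ D, g x ∂P := by
        rw [hP, withDensity_apply _ hT, lintegral_inter_add_sdiff _ _ hD]
    _ = ∫⁻ x in F ⁻¹' s ∩ D, h (F x) ∂P + ∫⁻ x in F ⁻¹' s \ D, h (F x) ∂P := by
        congr 1
        · rw [setLIntegral_eq_measure_of_map_eq_withDensity hσ hP (hT.inter hD) hinv,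
            setLIntegral_congr_fun (hT.inter hD) fun x hx => hhD x hx.2, setLIntegral_one]
        · exact setLIntegral_congr_fun (hT.diff hD) fun x hx => hgD x hx.2
    _ = (P.map F).withDensity h s := by
        rw [lintegral_inter_add_sdiff _ _ hD, withDensity_apply _ hs, setLIntegral_map hs hh hF]

end Pushforward

section Swap

variable {α β : Type*} {n : ℕ} (a b : Fin n)

theorem finSwap_apply_left (w : Fin n → α) : finSwap a b w a = w b := by
  simp [finSwap]

theorem finSwap_apply_right (w : Fin n → α) : finSwap a b w b = w a := by
  by_cases hab : b = a <;> simp [finSwap, hab]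

theorem comp_finSwap (f : α → β) (w : Fin n → α) : f ∘ finSwap a b w = finSwap a b (f ∘ w) := by
  funext j
  simp only [finSwap, Function.comp_apply]
  split_ifs <;> rfl

theorem finSwap_eq_self {w : Fin n → α} (hw : w a = w b) : finSwap a b w = w := by
  funext j
  simp only [finSwap]
  split_ifs with ha hb
  · rw [ha, hw]
  · rw [hb, hw]
  · rfl

theorem measurable_finSwap [MeasurableSpace α] : Measurable (finSwap (α := α) a b) := by
  refine measurable_pi_lambda _ fun j => ?_
  simp only [finSwap]
  split_ifs <;> exact measurable_pi_apply _

end Swap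

theorem measurable_intCast_sign : Measurable fun x : ℝ => (SignType.sign x : ℤ) := by
  refine Monotone.measurable fun x y hxy => ?_
  simp only [sign_apply]
  split_ifs <;> (try norm_num) <;> linarith

theorem measurable_ofReal_zpow_sign_sub (q : ℝ) {n : ℕ} {B : Set ℝ} (a b : Fin n) :
    Measurable fun u : Fin n → B =>
      ENNReal.ofReal (q ^ ((SignType.sign ((u b : ℝ) - (u a : ℝ)) : ℤ))) := by
  have hcoord (j : Fin n) : Measurable fun u : Fin n → B => (u j : ℝ) :=
    measurable_subtype_coe.comp (measurable_pi_apply j)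
  exact (Measurable.of_discrete (f := fun k : ℤ => ENNReal.ofReal (q ^ k))).comp
    (measurable_intCast_sign.comp ((hcoord b).sub (hcoord a)))

theorem sign_sub_comp_eq_of_ne {ι : Type*} [LinearOrder ι] {φ ψ : ι → ℝ} (hφ : Monotone φ)
    (hψ : StrictMono ψ) {a b : ι} (hab : φ a ≠ φ b) :
    SignType.sign (φ b - φ a) = SignType.sign (ψ b - ψ a) := by
  rcases lt_trichotomy a b with hlt | rfl | hgt
  · rw [sign_pos (sub_pos.2 ((hφ hlt.le).lt_of_ne hab)), sign_pos (sub_pos.2 (hψ hlt))]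
  · exact absurd rfl hab
  · rw [sign_neg (sub_neg.2 ((hφ hgt.le).lt_of_ne' hab)), sign_neg (sub_neg.2 (hψ hgt))]

theorem stmt_3_general (q : ℝ) (n : ℕ) (A B : Set ℝ)
    (f : A → B) (hf : ∀ a b : A, (a : ℝ) < (b : ℝ) → (f a : ℝ) ≤ (f b : ℝ))
    (P : Measure (Fin n → A))
    (hP : IsFinQExchangeableOn q A P) :
    IsFinQExchangeableOn q B (P.map (fun w => f ∘ w)) := by
  have hmono : Monotone fun x => (f x : ℝ) := fun x y hxy =>
    hxy.lt_or_eq.elim (hf x y) fun h => h ▸ le_rfl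
  have hfm : Measurable f := hmono.measurable.subtype_mk
  intro i hi
  set a : Fin n := ⟨i, Nat.lt_of_succ_lt hi⟩
  set b : Fin n := ⟨i + 1, hi⟩
  refine map_map_eq_withDensity_of_semiconj (D := {u | (f (u a) : ℝ) = f (u b)})
    (measurable_finSwap a b) (measurable_finSwap a b) (measurable_pi_lambda _ fun j =>
      hfm.comp (measurable_pi_apply j)) (measurable_ofReal_zpow_sign_sub q a b)
    (measurableSet_eq_fun (by fun_prop) (by fun_prop)) (hP i hi)
    (funext fun w => (comp_finSwap a b f w).symm) ?_ ?_ ?_ ?_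
  · ext u
    simp only [Set.mem_preimage, Set.mem_ofPred_eq, finSwap_apply_left, finSwap_apply_right]
    exact eq_comm
  · intro u hu
    rw [Function.comp_def, ← Function.comp_def f, comp_finSwap]
    exact finSwap_eq_self a b (Subtype.ext hu)
  · intro u hu
    simp [Set.mem_ofPred_eq.mp hu]
  · intro u hu
    simp only [Function.comp_apply]
    rw [sign_sub_comp_eq_of_ne hmono (Subtype.strictMono_coe _) hu]

/-- for finite alphabets `A, B ⊆ ℝ` and a weakly increasing `f : A → B`,
the coordinatewise map `f^n` preserves finite `q`-exchangeability. -/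
theorem stmt_3 (q : ℝ) (hq : 0 < q) (n : ℕ) (A B : Set ℝ) (hA : A.Finite) (hB : B.Finite)
    (f : A → B) (hf : ∀ a b : A, (a : ℝ) < (b : ℝ) → (f a : ℝ) ≤ (f b : ℝ))
    (P : Measure (Fin n → A)) [IsProbabilityMeasure P]
    (hP : IsFinQExchangeableOn q A P) :
    IsFinQExchangeableOn q B (P.map (fun w => f ∘ w)) :=
  stmt_3_general q n A B f hf P hP
end

section
/- Let v_1 ≤ v_2 ≤ ⋯ ≤ v_n be real numbers (an inversion-free word) and let (v_{τ(1)}, ..., v_{τ(n)}) be its q-shuffle. Then the law of the random word (v_{τ(1)}, ..., v_{τ(n)}) is a finitely q-exchangeable probability measure on ℝ^n: for every word u ∈ ℝ^n and every i ∈ {1, ..., n−1}, the probability of the word obtained from u by swapping the letters in positions i and i+1 equals q^{sgn(u_{i+1} − u_i)} times the probability of u. -/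
open MeasureTheory ProbabilityTheory

/-- The word remaining after `j` steps of the `q`-shuffle driven by the (0-indexed) choices
`x`: at each step the letter at position `x j` of the remaining word is removed. -/
def remWord {α : Type*} (v0 : List α) (x : ℕ → ℕ) : ℕ → List α
  | 0 => v0
  | j + 1 => (remWord v0 x j).eraseIdx (x j)

/-- The letter chosen at step `j` of the `q`-shuffle: the `x j`-th (0-indexed) letter of the
word remaining after `j` steps. -/
def qShuffleLetter {α : Type*} [Inhabited α] (v0 : List α) (x : ℕ → ℕ) (j : ℕ) : α :=
  (remWord v0 x j).getD (x j) default

/-- The `q`-integer `[m]_q = 1 + q + ⋯ + q^{m-1}`. -/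
def qInt (q : ℝ) (m : ℕ) : ℝ := ∑ i ∈ Finset.range m, q ^ i


/-!
Reading the `q`-shuffle of a sorted word `R` letter by letter, the next letter is `c` with
probability `posWeight q R c / [|R|]_q`, where `posWeight q R c` sums `q ^ p` over the positions
`p` of `c` in `R`; what remains is `R` with one copy of `c` removed, and since `R` is sorted it
does not matter which copy. So the probability of a word is a product `wordWeight` of positional
weights divided by `∏ j, [n - j]_q`. Swapping adjacent letters `c < d` changes only two factors:
all copies of `c` precede those of `d`, so removing a `c` first moves every `d` one step to the
left, which gives `posWeight R d * posWeight (R - d) c = q * posWeight R c * posWeight (R - c) d`.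
-/

section PosWeight

variable {α K : Type*} [LinearOrder α] [CommSemiring K]

def posWeight (q : K) (R : List α) (c : α) : K :=
  ∑ p ∈ Finset.range R.length, if R[p]? = some c then q ^ p else 0

theorem posWeight_cons (q : K) (a c : α) (R : List α) :
    posWeight q (a :: R) c = (if a = c then 1 else 0) + q * posWeight q R c := by
  simp only [posWeight, List.length_cons, Finset.sum_range_succ', List.getElem?_cons_succ,
    List.getElem?_cons_zero, Option.some_inj, pow_zero, Finset.mul_sum, mul_ite, mul_zero,
    pow_succ']
  rw [add_comm]

theorem posWeight_eq_sum_range {m : ℕ} (q : K) {R : List α} (c : α) (h : R.length ≤ m) :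
    posWeight q R c = ∑ p ∈ Finset.range m, if R[p]? = some c then q ^ p else 0 := by
  refine Finset.sum_subset (Finset.range_subset_range.2 h) fun _ _ hp => ?_
  rw [Finset.mem_range, not_lt] at hp
  rw [List.getElem?_eq_none hp, if_neg (by simp)]

theorem posWeight_eq_zero {q : K} {R : List α} {c : α} (h : c ∉ R) : posWeight q R c = 0 :=
  Finset.sum_eq_zero fun _ _ => if_neg fun hp => h (List.mem_of_getElem? hp)

variable {q : K} {R : List α} {c d : α}

theorem posWeight_erase_of_lt (hR : R.Pairwise (· ≤ ·)) (hcd : c < d) :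
    posWeight q (R.erase d) c = posWeight q R c := by
  induction R with
  | nil => rfl
  | cons a R ih =>
    by_cases had : a = d
    · subst had
      have hc : c ∉ R := fun hc => (List.rel_of_pairwise_cons hR hc).not_gt hcd
      simp [posWeight_cons, hcd.ne', posWeight_eq_zero hc]
    · rw [List.erase_cons_tail (by simpa using had), posWeight_cons, posWeight_cons,
        ih hR.of_cons]

theorem mul_posWeight_erase_of_lt (hR : R.Pairwise (· ≤ ·)) (hcd : c < d) (hc : c ∈ R) :
    q * posWeight q (R.erase c) d = posWeight q R d := by
  induction R with
  | nil => simp at hc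
  | cons a R ih =>
    by_cases hac : a = c
    · subst hac
      simp [posWeight_cons, hcd.ne]
    · have hcR : c ∈ R := (List.mem_cons.1 hc).resolve_left (Ne.symm hac)
      have had : a ≠ d := ((List.rel_of_pairwise_cons hR hcR).trans_lt hcd).ne
      rw [List.erase_cons_tail (by simpa using hac), posWeight_cons, posWeight_cons,
        ← ih hR.of_cons hcR, if_neg had]
      ring

theorem posWeight_mul_posWeight_erase_of_lt (hR : R.Pairwise (· ≤ ·)) (hcd : c < d) :
    posWeight q R d * posWeight q (R.erase d) c =
      q * (posWeight q R c * posWeight q (R.erase c) d) := by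
  by_cases hc : c ∈ R
  · rw [posWeight_erase_of_lt hR hcd, ← mul_posWeight_erase_of_lt hR hcd hc]
    ring
  · rw [posWeight_eq_zero hc, posWeight_eq_zero fun h => hc (List.erase_sublist.subset h)]
    ring

end PosWeight

section WordWeight

variable {α K : Type*} [LinearOrder α] [CommSemiring K]

def wordWeight (q : K) : List α → List α → K
  | _, [] => 1
  | R, c :: w => posWeight q R c * wordWeight q (R.erase c) w

theorem wordWeight_ofFn (q : K) (R : List α) {n : ℕ} (u : Fin n → α) :
    wordWeight q R (List.ofFn u) =
      ∏ k : Fin n, posWeight q (R.diff ((List.ofFn u).take k)) (u k) := by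
  induction n generalizing R with
  | zero => simp [wordWeight]
  | succ n ih => simp [List.ofFn_succ, wordWeight, ih, Fin.prod_univ_succ]

theorem wordWeight_append_swap {q : K} {R : List α} {c d : α} (hR : R.Pairwise (· ≤ ·))
    (hcd : c < d) (w₁ w₂ : List α) :
    wordWeight q R (w₁ ++ d :: c :: w₂) = q * wordWeight q R (w₁ ++ c :: d :: w₂) := by
  induction w₁ generalizing R with
  | nil =>
    simp only [List.nil_append, wordWeight, List.erase_comm d c, ← mul_assoc,
      posWeight_mul_posWeight_erase_of_lt hR hcd]
  | cons a w₁ ih =>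
    simp only [List.cons_append, wordWeight, ih (hR.sublist List.erase_sublist)]
    ring

end WordWeight

theorem List.ofFn_eq_take_append_cons_cons {α : Type*} {n i : ℕ} (h : i + 1 < n)
    (u : Fin n → α) :
    List.ofFn u =
      (List.ofFn u).take i ++ u ⟨i, by omega⟩ :: u ⟨i + 1, h⟩ ::
        (List.ofFn u).drop (i + 2) := by
  conv_lhs => rw [← List.take_append_drop i (List.ofFn u)]
  rw [List.drop_eq_getElem_cons (by simp; omega), List.drop_eq_getElem_cons (by simp; omega)]
  simp

theorem ofFn_finSwap {α : Type*} {n i : ℕ} (h : i + 1 < n) (u : Fin n → α) :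
    List.ofFn (finSwap ⟨i, by omega⟩ ⟨i + 1, h⟩ u) =
      (List.ofFn u).take i ++ u ⟨i + 1, h⟩ :: u ⟨i, by omega⟩ ::
        (List.ofFn u).drop (i + 2) := by
  refine List.ext_getElem (by simp; omega) fun j h₁ _ => ?_
  simp only [List.length_ofFn] at h₁
  simp only [List.getElem_ofFn, finSwap, Fin.ext_iff, List.getElem_append, List.length_take,
    List.length_ofFn, List.getElem_cons, List.getElem_take, List.getElem_drop]
  grind

theorem wordWeight_ofFn_finSwap {α K : Type*} [AddCommGroup α] [LinearOrder α]
    [IsOrderedAddMonoid α] [Field K] {q : K} (hq : q ≠ 0) {R : List α}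
    (hR : R.Pairwise (· ≤ ·)) {n i : ℕ} (h : i + 1 < n) (u : Fin n → α) :
    wordWeight q R (List.ofFn (finSwap ⟨i, by omega⟩ ⟨i + 1, h⟩ u)) =
      q ^ (SignType.sign (u ⟨i + 1, h⟩ - u ⟨i, by omega⟩) : ℤ) *
        wordWeight q R (List.ofFn u) := by
  rw [ofFn_finSwap h]
  conv_rhs => rw [List.ofFn_eq_take_append_cons_cons h]
  rcases lt_trichotomy (u ⟨i, by omega⟩) (u ⟨i + 1, h⟩) with hlt | heq | hgt
  · rw [wordWeight_append_swap hR hlt, sign_pos (sub_pos.2 hlt)]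
    simp
  · simp [heq]
  · rw [wordWeight_append_swap hR hgt, sign_neg (sub_neg.2 hgt)]
    simp [hq]

theorem List.eraseIdx_eq_erase_of_pairwise {α : Type*} [LinearOrder α] {R : List α} {p : ℕ}
    {c : α} (hR : R.Pairwise (· ≤ ·)) (hp : R[p]? = some c) : R.eraseIdx p = R.erase c := by
  obtain ⟨hlt, rfl⟩ := List.getElem?_eq_some_iff.1 hp
  exact (List.erase_getElem hlt).symm.eq_of_pairwise' (hR.sublist (List.eraseIdx_sublist _ _))
    (hR.sublist List.erase_sublist)

section Shuffle

variable {α : Type*} {R : List α} {x y : ℕ → ℕ} {k m n : ℕ}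

theorem remWord_congr (h : ∀ t < k, x t = y t) : remWord R x k = remWord R y k := by
  induction k with
  | zero => rfl
  | succ k ih =>
    rw [remWord, remWord, ih fun t ht => h t (ht.trans k.lt_succ_self), h k k.lt_succ_self]

theorem qShuffleLetter_congr [Inhabited α] (h : ∀ t ≤ k, x t = y t) :
    qShuffleLetter R x k = qShuffleLetter R y k := by
  rw [qShuffleLetter, qShuffleLetter, remWord_congr fun t ht => h t ht.le, h k le_rfl]

theorem length_remWord (h : ∀ t < k, x t < (remWord R x t).length) :
    (remWord R x k).length = R.length - k := by
  induction k with
  | zero => rfl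
  | succ k ih =>
    rw [remWord, List.length_eraseIdx_of_lt (h k k.lt_succ_self),
      ih fun t ht => h t (ht.trans k.lt_succ_self)]
    omega

theorem forall_lt_length_remWord_iff :
    (∀ k < m, x k < (remWord R x k).length) ↔ ∀ k < m, x k < R.length - k := by
  induction m with
  | zero => simp
  | succ m ih =>
    simp only [Nat.forall_lt_succ_right]
    exact ⟨fun h => ⟨ih.1 h.1, length_remWord h.1 ▸ h.2⟩,
      fun h => ⟨ih.2 h.1, (length_remWord (ih.2 h.1)).symm ▸ h.2⟩⟩

variable [LinearOrder α] {w : List α}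

theorem remWord_eq_diff_take (hR : R.Pairwise (· ≤ ·))
    (h : ∀ t < k, (R.diff (w.take t))[x t]? = w[t]?) :
    remWord R x k = R.diff (w.take k) := by
  induction k with
  | zero => simp [remWord]
  | succ k ih =>
    have hk := h k k.lt_succ_self
    rw [remWord, ih fun t ht => h t (ht.trans k.lt_succ_self), List.take_add_one,
      List.diff_append]
    cases hw : w[k]? with
    | none =>
      rw [hw] at hk
      simp [List.eraseIdx_of_length_le (List.getElem?_eq_none_iff.1 hk)]
    | some c =>
      rw [hw] at hk
      simp [List.eraseIdx_eq_erase_of_pairwise (hR.sublist (List.diff_sublist _ _)) hk]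

theorem forall_getElem?_remWord_iff (hR : R.Pairwise (· ≤ ·)) :
    (∀ k < m, (remWord R x k)[x k]? = w[k]?) ↔
      ∀ k < m, (R.diff (w.take k))[x k]? = w[k]? := by
  induction m with
  | zero => simp
  | succ m ih =>
    simp only [Nat.forall_lt_succ_right, ih]
    exact and_congr_right fun h => by rw [remWord_eq_diff_take hR h]

theorem forall_qShuffleLetter_eq_iff [Inhabited α] (hR : R.Pairwise (· ≤ ·))
    (u : Fin n → α) :
    (∀ k : Fin n, x k < R.length - k ∧ qShuffleLetter R x k = u k) ↔
      ∀ k : Fin n, (R.diff ((List.ofFn u).take k))[x k]? = some (u k) := by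
  have hrem : (∀ k : Fin n, (remWord R x k)[x k]? = some (u k)) ↔
      ∀ k : Fin n, (R.diff ((List.ofFn u).take k))[x k]? = some (u k) := by
    simpa +contextual [List.getElem?_ofFn, Fin.forall_iff] using
      forall_getElem?_remWord_iff (m := n) (w := List.ofFn u) (x := x) hR
  rw [← hrem]
  constructor
  · intro h k
    have hlt : x k < (remWord R x k).length :=
      forall_lt_length_remWord_iff.2 (fun t ht => (h ⟨t, by omega⟩).1) k (k : ℕ).lt_add_one
    rw [List.getElem?_eq_getElem hlt, ← (h k).2, qShuffleLetter, List.getD_eq_getElem]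
  · intro h k
    have hlt : ∀ t < n, x t < (remWord R x t).length :=
      fun t ht => (List.getElem?_eq_some_iff.1 (h ⟨t, ht⟩)).1
    obtain ⟨hk, he⟩ := List.getElem?_eq_some_iff.1 (h k)
    exact ⟨forall_lt_length_remWord_iff.1 hlt k k.2,
      by rw [qShuffleLetter, List.getD_eq_getElem _ _ hk, he]⟩

end Shuffle

noncomputable def truncGeom (q : ℝ) (m p : ℕ) : ℝ := if p < m then q ^ p / qInt q m else 0

theorem truncGeom_nonneg {q : ℝ} (hq : 0 ≤ q) (m p : ℕ) : 0 ≤ truncGeom q m p := by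
  unfold truncGeom qInt
  split_ifs <;> positivity

section Law

variable {α : Type*} [LinearOrder α] [Inhabited α] {v0 : List α} {n : ℕ}

theorem sum_truncGeom_qShuffle (q : ℝ) (hR : v0.Pairwise (· ≤ ·)) (hlen : v0.length = n)
    (u : Fin n → α) :
    ∑ x ∈ Fintype.piFinset fun _ : Fin n => Finset.range n,
        (if (fun m : Fin n => qShuffleLetter v0 (Function.extend Fin.val x 0) m) = u
          then ∏ j : Fin n, truncGeom q (n - j) (x j) else 0) =
      wordWeight q v0 (List.ofFn u) / ∏ j : Fin n, qInt q (n - j) := by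
  have hterm (x : Fin n → ℕ) :
      (if (fun m : Fin n => qShuffleLetter v0 (Function.extend Fin.val x 0) m) = u
        then ∏ j : Fin n, truncGeom q (n - j) (x j) else 0) =
      (∏ j : Fin n,
          if (v0.diff ((List.ofFn u).take j))[x j]? = some (u j) then q ^ x j else 0) /
        ∏ j : Fin n, qInt q (n - j) := by
    have hiff := forall_qShuffleLetter_eq_iff (x := Function.extend Fin.val x 0) hR u
    simp only [Fin.val_injective.extend_apply, hlen, forall_and] at hiff
    simp only [truncGeom, Finset.prod_ite_zero, Finset.mem_univ, true_implies, ← hiff,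
      funext_iff, Finset.prod_div_distrib]
    split_ifs <;> simp_all
  rw [Finset.sum_congr rfl fun x _ => hterm x, ← Finset.sum_div, wordWeight_ofFn]
  congr 1
  have hle (j : Fin n) : (v0.diff ((List.ofFn u).take j)).length ≤ n :=
    hlen ▸ (List.diff_sublist _ _).length_le
  rw [Finset.prod_congr rfl fun j _ => posWeight_eq_sum_range q (u j) (hle j),
    Finset.prod_univ_sum]

theorem map_qShuffle_apply_singleton {Ω : Type*} [MeasurableSpace α]
    [MeasurableSingletonClass α] [MeasurableSpace Ω] {P : Measure Ω} [IsProbabilityMeasure P]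
    {q : ℝ} (hq : 0 ≤ q) (hR : v0.Pairwise (· ≤ ·)) (hlen : v0.length = n) {ξ : ℕ → Ω → ℕ}
    (hmeas : ∀ j, Measurable (ξ j)) (hindep : iIndepFun ξ P)
    (hgeom : ∀ j < n, ∀ i : ℕ,
      P {ω | ξ j ω = i} = ENNReal.ofReal (truncGeom q (n - j) i))
    (u : Fin n → α) :
    P.map (fun ω (m : Fin n) => qShuffleLetter v0 (fun t => ξ t ω) m) {u} =
      ENNReal.ofReal (wordWeight q v0 (List.ofFn u) / ∏ j : Fin n, qInt q (n - j)) := by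
  set X : Ω → Fin n → ℕ := fun ω j => ξ j ω
  set F : (Fin n → ℕ) → Fin n → α :=
    fun x m => qShuffleLetter v0 (Function.extend Fin.val x 0) m
  have hFX : (fun ω (m : Fin n) => qShuffleLetter v0 (fun t => ξ t ω) m) = F ∘ X := by
    funext ω m
    exact qShuffleLetter_congr fun t ht =>
      (Fin.val_injective.extend_apply (X ω) 0 ⟨t, by omega⟩).symm
  have hX : Measurable X := measurable_pi_lambda _ fun j => hmeas j
  have hF : Measurable F := measurable_of_countable F
  have hlaw : P.map X = Measure.pi fun j : Fin n => P.map (ξ j) :=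
    (hindep.precomp Fin.val_injective).map_fun_eq_pi_map fun j => (hmeas j).aemeasurable
  have hpoint (x : Fin n → ℕ) : (F ⁻¹' {u}).indicator (fun x => P.map X {x}) x =
      ENNReal.ofReal (if F x = u then ∏ j : Fin n, truncGeom q (n - j) (x j) else 0) := by
    classical
    rw [Set.indicator_apply, Set.mem_preimage, Set.mem_singleton_iff, hlaw,
      Measure.pi_singleton]
    split_ifs
    · rw [ENNReal.ofReal_prod_of_nonneg fun j _ => truncGeom_nonneg hq _ _]
      refine Finset.prod_congr rfl fun j _ => ?_
      rw [Measure.map_apply (hmeas j) (measurableSet_singleton _)]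
      exact hgeom j j.2 (x j)
    · simp
  have hsupp (x : Fin n → ℕ) (hx : x ∉ Fintype.piFinset fun _ : Fin n => Finset.range n) :
      (if F x = u then ∏ j : Fin n, truncGeom q (n - j) (x j) else 0) = 0 := by
    obtain ⟨j, hj⟩ := not_forall.1 (Fintype.mem_piFinset.not.1 hx)
    rw [Finset.mem_range, not_lt] at hj
    rw [Finset.prod_eq_zero (Finset.mem_univ j) (if_neg (by omega)), ite_self]
  rw [hFX, ← Measure.map_map hF hX, Measure.map_apply hF (measurableSet_singleton u),
    ← Measure.tsum_indicator_apply_singleton _ _ (hF (measurableSet_singleton u)),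
    tsum_congr hpoint, tsum_eq_sum fun x hx => by rw [hsupp x hx, ENNReal.ofReal_zero],
    ← ENNReal.ofReal_sum_of_nonneg, sum_truncGeom_qShuffle q hR hlen]
  intro x _
  split_ifs
  · exact Finset.prod_nonneg fun j _ => truncGeom_nonneg hq _ _
  · exact le_rfl

end Law

theorem stmt_6_general (q : ℝ) (hq0 : 0 < q) (n : ℕ)
    (v : Fin n → ℝ) (hv : Monotone v)
    (Ω : Type*) [MeasurableSpace Ω] (P : Measure Ω) [IsProbabilityMeasure P]
    (ξ : ℕ → Ω → ℕ) (hmeas : ∀ j, Measurable (ξ j))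
    (hindep : iIndepFun ξ P)
    (hgeom : ∀ j < n, ∀ i : ℕ, P {ω | ξ j ω = i} =
      ENNReal.ofReal (if i < n - j then q ^ i / qInt q (n - j) else 0)) :
    ∀ (u : Fin n → ℝ) (i : ℕ) (h : i + 1 < n),
      (P.map (fun ω (m : Fin n) => qShuffleLetter (List.ofFn v) (fun t => ξ t ω) (m : ℕ)))
          {finSwap ⟨i, Nat.lt_of_succ_lt h⟩ ⟨i + 1, h⟩ u} =
        ENNReal.ofReal (q ^ ((SignType.sign (u ⟨i + 1, h⟩ - u ⟨i, Nat.lt_of_succ_lt h⟩)) : ℤ)) *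
          (P.map (fun ω (m : Fin n) => qShuffleLetter (List.ofFn v) (fun t => ξ t ω) (m : ℕ)))
            {u} := by
  intro u i h
  have hR : (List.ofFn v).Pairwise (· ≤ ·) := hv.sortedLE_ofFn.pairwise
  have hlaw := map_qShuffle_apply_singleton hq0.le hR List.length_ofFn hmeas hindep hgeom
  rw [hlaw, hlaw, ← ENNReal.ofReal_mul (zpow_nonneg hq0.le _),
    wordWeight_ofFn_finSwap hq0.ne' hR h, mul_div_assoc]

/-- the law of the `q`-shuffle of an inversion-free word `v_1 ≤ ⋯ ≤ v_n` is
finitely `q`-exchangeable: swapping two adjacent letters of a word multiplies its probability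
by `q ^ sgn(u_{i+1} - u_i)`.  Here `ξ_0, …, ξ_{n-1}` are independent, `ξ_j` having the
(0-indexed) truncated geometric law `P(ξ_j = i) = q^i/[n-j]_q` on `{0, …, n-j-1}`. -/
theorem stmt_6 (q : ℝ) (hq0 : 0 < q) (hq1 : q < 1) (n : ℕ) (hn : 1 ≤ n)
    (v : Fin n → ℝ) (hv : Monotone v)
    (Ω : Type*) [MeasurableSpace Ω] (P : Measure Ω) [IsProbabilityMeasure P]
    (ξ : ℕ → Ω → ℕ) (hmeas : ∀ j, Measurable (ξ j))
    (hindep : iIndepFun ξ P)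
    (hgeom : ∀ j < n, ∀ i : ℕ, P {ω | ξ j ω = i} =
      ENNReal.ofReal (if i < n - j then q ^ i / qInt q (n - j) else 0)) :
    ∀ (u : Fin n → ℝ) (i : ℕ) (h : i + 1 < n),
      (P.map (fun ω (m : Fin n) => qShuffleLetter (List.ofFn v) (fun t => ξ t ω) (m : ℕ)))
          {finSwap ⟨i, Nat.lt_of_succ_lt h⟩ ⟨i + 1, h⟩ u} =
        ENNReal.ofReal (q ^ ((SignType.sign (u ⟨i + 1, h⟩ - u ⟨i, Nat.lt_of_succ_lt h⟩)) : ℤ)) *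
          (P.map (fun ω (m : Fin n) => qShuffleLetter (List.ofFn v) (fun t => ξ t ω) (m : ℕ)))
            {u} :=
  stmt_6_general q hq0 n v hv Ω P ξ hmeas hindep hgeom
end

section
/- The random permutation τ implementing the q-shuffle is distributed according to the Mallows measure: for every permutation σ of {1, ..., n}, P(τ = σ) = q^{inv(σ)}/[n]_q!, where inv(σ) = #{(i, j) : 1 ≤ i < j ≤ n, σ(i) > σ(j)} and [n]_q! = ∏_{j=1}^n (1 + q + ⋯ + q^{j−1}). -/
open MeasureTheory ProbabilityTheory

/-- The random permutation implementing the `q`-shuffle of `{0, …, n-1}` (0-indexed):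
`τ(j)` is the `x j`-th smallest element not yet chosen. -/
def qShuffleIndex (n : ℕ) (x : ℕ → ℕ) (j : ℕ) : ℕ :=
  (remWord (List.range n) x j).getD (x j) 0

/-- The number of inversions of a permutation. -/
def invPerm {n : ℕ} (σ : Equiv.Perm (Fin n)) : ℕ :=
  (Finset.univ.filter (fun p : Fin n × Fin n => p.1 < p.2 ∧ σ p.2 < σ p.1)).card

/-- The `q`-factorial `[n]_q! = [1]_q [2]_q ⋯ [n]_q`. -/
def qFact (q : ℝ) (n : ℕ) : ℝ := ∏ j ∈ Finset.range n, qInt q (j + 1)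

/-! The `q`-shuffle decodes a Lehmer code: as long as each `ξ_j` lies in its range
`{0, …, n-j-1}` (which holds almost surely), `τ = σ` exactly when every `ξ_j` is the position of
`σ j` among the values not yet used, namely `c_j = #{k > j | σ k < σ j}`. Independence gives
`P(τ = σ) = ∏ q^{c_j} / [n-j]_q`, and `∑ c_j = inv σ` counts inversions by their left end. -/

open Finset

theorem List.Pairwise.idxOf_eq_length_filter_lt {α : Type*} [LinearOrder α] {l : List α}
    (hl : l.Pairwise (· < ·)) {a : α} (ha : a ∈ l) :
    l.idxOf a = (l.filter (· < a)).length := by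
  induction l with
  | nil => simp at ha
  | cons b l ih =>
    rw [List.pairwise_cons] at hl
    rcases List.mem_cons.1 ha with rfl | ha
    · have : l.filter (· < a) = [] :=
        List.filter_eq_nil_iff.2 fun c hc => by simpa using (hl.1 c hc).le
      simp [this]
    · have hba := hl.1 a ha
      simp [hba.ne, hba, ih hl.2 ha]

theorem length_filter_finRange {n : ℕ} (p : Fin n → Bool) :
    ((List.finRange n).filter p).length = #{m | p m} := by
  simp [Finset.card_def, Fin.univ_def, Finset.filter_val]

theorem remWord_map {α β : Type*} (g : α → β) (l : List α) (x : ℕ → ℕ) (j : ℕ) :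
    remWord (l.map g) x j = (remWord l x j).map g := by
  induction j with
  | zero => rfl
  | succ j ih => simp only [remWord, ih, List.eraseIdx_map]

theorem qShuffleIndex_eq_getD (n : ℕ) (x : ℕ → ℕ) (j : ℕ) :
    qShuffleIndex n x j = ((remWord (List.finRange n) x j).map Fin.val).getD (x j) 0 := by
  rw [qShuffleIndex, ← List.map_coe_finRange_eq_range, remWord_map]

theorem forall_iff_forall_of_forall_lt {α : Type*} [LT α] [WellFoundedLT α] {p q : α → Prop}
    (h : ∀ a, (∀ b < a, q b) → (p a ↔ q a)) : (∀ a, p a) ↔ ∀ a, q a := by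
  constructor
  · intro hp a
    induction a using WellFoundedLT.induction with
    | _ a ih => exact (h a ih).1 (hp a)
  · intro hq a
    exact (h a fun b _ => hq b).2 (hq a)

section Lehmer

variable {n : ℕ} (σ : Equiv.Perm (Fin n))

def lehmerCode (j : Fin n) : ℕ := #{k | j < k ∧ σ k < σ j}

theorem sum_lehmerCode : ∑ j, lehmerCode σ j = invPerm σ := by
  simp only [invPerm, lehmerCode, Finset.card_filter, Fintype.sum_prod_type]

theorem lehmerCode_lt (j : Fin n) : lehmerCode σ j < n - j := by
  calc lehmerCode σ j ≤ #(Ioi j) := card_le_card fun k hk => by simp_all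
    _ < n - j := by rw [Fin.card_Ioi]; omega

def remainingValues (j : ℕ) : List (Fin n) :=
  (List.finRange n).filter fun m => j ≤ (σ.symm m : ℕ)

theorem pairwise_remainingValues (j : ℕ) : (remainingValues σ j).Pairwise (· < ·) :=
  (List.pairwise_lt_finRange n).filter _

theorem nodup_remainingValues (j : ℕ) : (remainingValues σ j).Nodup :=
  (pairwise_remainingValues σ j).imp ne_of_lt

theorem remainingValues_zero : remainingValues σ 0 = List.finRange n := by
  simp [remainingValues]

theorem remainingValues_succ (j : Fin n) :
    remainingValues σ (j + 1) = (remainingValues σ j).erase (σ j) := by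
  rw [(nodup_remainingValues σ j).erase_eq_filter, remainingValues, remainingValues,
    List.filter_filter]
  refine List.filter_congr fun m _ => ?_
  have : m ≠ σ j ↔ σ.symm m ≠ j := by rw [Ne, Ne, Equiv.symm_apply_eq]
  rw [Bool.eq_iff_iff]
  simp only [decide_eq_true_eq, Bool.and_eq_true, bne_iff_ne, this, ← Fin.val_ne_iff]
  omega

theorem mem_remainingValues (j : Fin n) : σ j ∈ remainingValues σ j := by
  simp [remainingValues]

theorem length_remainingValues {j : ℕ} (hj : j ≤ n) : (remainingValues σ j).length = n - j := by
  induction j with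
  | zero => simp [remainingValues_zero]
  | succ j ih =>
    rw [remainingValues_succ σ ⟨j, hj⟩, List.length_erase_of_mem (mem_remainingValues σ _),
      ih (by omega)]
    omega

theorem idxOf_remainingValues (j : Fin n) :
    (remainingValues σ j).idxOf (σ j) = lehmerCode σ j := by
  rw [(pairwise_remainingValues σ j).idxOf_eq_length_filter_lt (mem_remainingValues σ j),
    remainingValues, List.filter_filter, length_filter_finRange]
  refine Finset.card_equiv σ.symm fun m => ?_
  have hne : (m : ℕ) < σ j → (σ.symm m : ℕ) ≠ j := fun h e => by
    rw [σ.symm_apply_eq.1 (Fin.ext e)] at h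
    exact lt_irrefl _ h
  simp only [mem_filter, mem_univ, true_and, Bool.and_eq_true, decide_eq_true_eq,
    Equiv.apply_symm_apply, Fin.lt_def]
  constructor
  · exact fun h => ⟨lt_of_le_of_ne h.2 (hne h.1).symm, h.1⟩
  · exact fun h => ⟨h.2, h.1.le⟩

theorem remWord_finRange {x : ℕ → ℕ} {j : ℕ} (hj : j ≤ n)
    (hx : ∀ t : Fin n, (t : ℕ) < j → x t = lehmerCode σ t) :
    remWord (List.finRange n) x j = remainingValues σ j := by
  induction j with
  | zero => exact (remainingValues_zero σ).symm
  | succ j ih =>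
    have hjn : j < n := hj
    rw [remWord, ih hjn.le fun t ht => hx t (by omega), hx ⟨j, hjn⟩ (by simp),
      ← idxOf_remainingValues, ← List.erase_eq_eraseIdx_of_idxOf rfl]
    exact (remainingValues_succ σ ⟨j, hjn⟩).symm

theorem qShuffleIndex_eq_iff {x : ℕ → ℕ} (hx : ∀ t : Fin n, x t < n - t) :
    (∀ j : Fin n, qShuffleIndex n x j = σ j) ↔ ∀ j : Fin n, x j = lehmerCode σ j := by
  refine forall_iff_forall_of_forall_lt fun j hlt => ?_
  have hlen : x j < (remainingValues σ j).length := by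
    rw [length_remainingValues σ j.is_lt.le]; exact hx j
  rw [qShuffleIndex_eq_getD, remWord_finRange σ j.is_lt.le fun t ht => hlt t ht,
    List.getD_eq_getElem _ _ (by simpa using hlen), List.getElem_map, Fin.val_inj,
    ← idxOf_remainingValues]
  constructor
  · intro h
    rw [← h, (nodup_remainingValues σ j).idxOf_getElem]
  · intro h
    simp [h]

end Lehmer

theorem ae_lt_of_measure_eq_zero {Ω : Type*} [MeasurableSpace Ω] {P : Measure Ω} {X : Ω → ℕ}
    {m : ℕ} (h : ∀ i, m ≤ i → P {ω | X ω = i} = 0) : ∀ᵐ ω ∂P, X ω < m := by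
  have hset : {ω | ¬ X ω < m} = X ⁻¹' {i | m ≤ i} := by ext; simp
  rw [ae_iff, hset, measure_preimage_eq_zero_iff_of_countable (Set.to_countable _)]
  exact h

theorem qFact_eq_prod_qInt_sub (q : ℝ) (n : ℕ) : qFact q n = ∏ j : Fin n, qInt q (n - j) := by
  rw [qFact, Fin.prod_univ_eq_prod_range (fun j => qInt q (n - j)), ← prod_range_reflect]
  refine prod_congr rfl fun j hj => ?_
  rw [mem_range] at hj
  congr 1
  omega

theorem qInt_nonneg {q : ℝ} (hq : 0 ≤ q) (m : ℕ) : 0 ≤ qInt q m :=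
  sum_nonneg fun i _ => pow_nonneg hq i

theorem prod_pow_lehmerCode_div_qInt (q : ℝ) {n : ℕ} (σ : Equiv.Perm (Fin n)) :
    ∏ j : Fin n, q ^ lehmerCode σ j / qInt q (n - j) = q ^ invPerm σ / qFact q n := by
  rw [prod_div_distrib, prod_pow_eq_pow_sum, sum_lehmerCode, qFact_eq_prod_qInt_sub]

theorem stmt_7_general (q : ℝ) (hq0 : 0 < q) (n : ℕ)
    (Ω : Type*) [MeasurableSpace Ω] (P : Measure Ω)
    (ξ : ℕ → Ω → ℕ)
    (hindep : iIndepFun ξ P)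
    (hgeom : ∀ j < n, ∀ i : ℕ, P {ω | ξ j ω = i} =
      ENNReal.ofReal (if i < n - j then q ^ i / qInt q (n - j) else 0))
    (σ : Equiv.Perm (Fin n)) :
    P {ω | ∀ j : Fin n, qShuffleIndex n (fun t => ξ t ω) (j : ℕ) = (σ j : ℕ)} =
      ENNReal.ofReal (q ^ invPerm σ / qFact q n) := by
  have hbound : ∀ᵐ ω ∂P, ∀ j : Fin n, ξ j ω < n - j := ae_all_iff.2 fun j =>
    ae_lt_of_measure_eq_zero fun i hi => by
      rw [hgeom j j.is_lt, if_neg (by omega), ENNReal.ofReal_zero]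
  calc _ = P (⋂ j : Fin n, ξ j ⁻¹' {lehmerCode σ j}) :=
        measure_congr <| Filter.eventuallyEq_set.2 <| hbound.mono fun ω hω => by
          simpa [Set.mem_iInter] using qShuffleIndex_eq_iff σ hω
    _ = ∏ j : Fin n, P (ξ j ⁻¹' {lehmerCode σ j}) :=
        (hindep.precomp Fin.val_injective).meas_iInter fun j =>
          ⟨_, measurableSet_singleton _, rfl⟩
    _ = ∏ j : Fin n, ENNReal.ofReal (q ^ lehmerCode σ j / qInt q (n - j)) :=
        prod_congr rfl fun j _ => by
          have hj := hgeom j j.is_lt (lehmerCode σ j)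
          rwa [if_pos (lehmerCode_lt σ j)] at hj
    _ = ENNReal.ofReal (q ^ invPerm σ / qFact q n) := by
      rw [← ENNReal.ofReal_prod_of_nonneg fun j _ =>
        div_nonneg (pow_nonneg hq0.le _) (qInt_nonneg hq0.le _), prod_pow_lehmerCode_div_qInt]

/-- the random permutation `τ` implementing the `q`-shuffle has the Mallows
distribution: `P(τ = σ) = q^{inv σ}/[n]_q!`. Here `ξ_0, …, ξ_{n-1}` are independent, `ξ_j`
having the (0-indexed) truncated geometric law `P(ξ_j = i) = q^i/[n-j]_q` on `{0, …, n-j-1}`. -/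
theorem stmt_7 (q : ℝ) (hq0 : 0 < q) (hq1 : q < 1) (n : ℕ) (hn : 1 ≤ n)
    (Ω : Type*) [MeasurableSpace Ω] (P : Measure Ω) [IsProbabilityMeasure P]
    (ξ : ℕ → Ω → ℕ) (hmeas : ∀ j, Measurable (ξ j))
    (hindep : iIndepFun ξ P)
    (hgeom : ∀ j < n, ∀ i : ℕ, P {ω | ξ j ω = i} =
      ENNReal.ofReal (if i < n - j then q ^ i / qInt q (n - j) else 0))
    (σ : Equiv.Perm (Fin n)) :
    P {ω | ∀ j : Fin n, qShuffleIndex n (fun t => ξ t ω) (j : ℕ) = (σ j : ℕ)} =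
      ENNReal.ofReal (q ^ invPerm σ / qFact q n) :=
  stmt_7_general q hq0 n Ω P ξ hindep hgeom σ
end

section
/- Fix d ≥ 1, q > 0, and μ, λ ∈ ℕ^d with μ_a ≤ λ_a for every a; set m = μ_1 + ⋯ + μ_d and n = λ_1 + ⋯ + λ_d. For a word u ∈ {1, ..., d}^{n−m} in which each letter a occurs exactly λ_a − μ_a times, define its weight as ∏_{j=1}^{n−m} q^{Σ_{b > u_j} (μ_b + #{i < j : u_i = b})}. Then the sum of the weights over all such words equals q^{N(μ,λ)} · (q; q)_{n−m} / ∏_{a=1}^d (q; q)_{λ_a − μ_a}, where N(μ, λ) = Σ_{1 ≤ b < a ≤ d} λ_b μ_a − Σ_{1 ≤ b < a ≤ d} μ_b μ_a and (q; q)_k = ∏_{i=1}^k (1 − q^i). In particular, for μ = 0 this gives MacMahon's formula: the sum of q^{inv(u)} over all words u of length n with exactly λ_a occurrences of each letter a equals the Gaussian multinomial coefficient (q; q)_n / ∏_{a=1}^d (q; q)_{λ_a}, where inv(u) = #{(i, j) : i < j, u_i > u_j}. -/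
/-!
Sorting words by their last letter `a` gives the recursion
`W(n+1, c) = Σ_a q^{Σ_{b>a} (μ_b + c_b)} W(n, c - e_a)`, the last step of a lattice path.
With `N(c) = Σ_{a<b} c_a μ_b` (so that `N(μ, λ) = N(λ - μ)`), after multiplying by
`∏_a (q;q)_{c_a}` the induction hypothesis turns the `a`-th term into
`q^{N(c)} (q^{t_{a+1}} - q^{t_a}) (q;q)_n` with `t_i = Σ_{b ≥ i} c_b`, because
`(1 - q^{c_a}) q^{t_{a+1}} = q^{t_{a+1}} - q^{t_a}`. These telescope to
`q^{N(c)} (1 - q^{n+1}) (q;q)_n`. For `μ = 0` the weight of a word is `q^{inv u}`.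
-/

open Finset

/-- The `q`-Pochhammer symbol `(q; q)_k = ∏_{i=1}^k (1 - q^i)`. -/
def qPoch (q : ℝ) (k : ℕ) : ℝ := ∏ i ∈ Finset.range k, (1 - q ^ (i + 1))

lemma qPoch_succ (q : ℝ) (k : ℕ) : qPoch q (k + 1) = qPoch q k * (1 - q ^ (k + 1)) :=
  prod_range_succ _ _

section PiSingle

variable {ι : Type*} [DecidableEq ι] {c : ι → ℕ} {a : ι}

lemma Pi.single_one_le_of_pos (ha : 0 < c a) : Pi.single a 1 ≤ c := by
  intro b
  rcases eq_or_ne b a with rfl | hb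
  · simpa using Nat.one_le_iff_ne_zero.2 ha.ne'
  · simp [hb]

lemma sum_sub_single_one [Fintype ι] (ha : 0 < c a) :
    ∑ b, (c - Pi.single a 1 : ι → ℕ) b = ∑ b, c b - 1 := by
  simp only [Pi.sub_apply]
  rw [sum_tsub_distrib _ fun b _ => Pi.single_one_le_of_pos ha b, sum_pi_single',
    if_pos (mem_univ a)]

end PiSingle

namespace QPascal

variable {d : ℕ}

def letterCount {n : ℕ} (u : Fin n → Fin d) (a : Fin d) : ℕ := #{j | u j = a}

def words (n : ℕ) (c : Fin d → ℕ) : Finset (Fin n → Fin d) :=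
  {u | ∀ a, letterCount u a = c a}

def inversions {n : ℕ} (u : Fin n → Fin d) : ℕ := #{p : Fin n × Fin n | p.1 < p.2 ∧ u p.2 < u p.1}

def wordWeight (q : ℝ) (μ : Fin d → ℕ) {n : ℕ} (u : Fin n → Fin d) : ℝ :=
  ∏ j, q ^ (∑ b ∈ univ.filter (fun b => u j < b), (μ b + #{i | i < j ∧ u i = b}))

def wordSum (q : ℝ) (μ : Fin d → ℕ) (n : ℕ) (c : Fin d → ℕ) : ℝ :=
  ∑ u ∈ words n c, wordWeight q μ u

def crossExponent (μ c : Fin d → ℕ) : ℕ :=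
  ∑ p ∈ univ.filter (fun p : Fin d × Fin d => p.1 < p.2), c p.1 * μ p.2

/-- Indexed by `i : ℕ` rather than `Fin d` so that it telescopes over `i = 0, …, d`. -/
def tailSum (c : Fin d → ℕ) (i : ℕ) : ℕ := ∑ b ∈ univ.filter (fun b : Fin d => i ≤ b), c b

section Words

variable {n : ℕ}

lemma letterCount_snoc (v : Fin n → Fin d) (a b : Fin d) :
    letterCount (Fin.snoc v a : Fin (n + 1) → Fin d) b =
      letterCount v b + (Pi.single a 1 : Fin d → ℕ) b := by
  simp only [letterCount, card_filter, Fin.sum_univ_castSucc, Fin.snoc_castSucc, Fin.snoc_last,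
    Pi.single_apply, eq_comm]

lemma snoc_mem_words_iff (v : Fin n → Fin d) (a : Fin d) (c : Fin d → ℕ) :
    Fin.snoc v a ∈ words (n + 1) c ↔ 0 < c a ∧ v ∈ words n (c - Pi.single a 1) := by
  simp only [words, mem_filter, mem_univ, true_and, letterCount_snoc, Pi.sub_apply]
  constructor
  · intro h
    refine ⟨by have := h a; simp at this; omega, fun b => ?_⟩
    have := h b
    omega
  · rintro ⟨ha, h⟩ b
    have := h b
    have : (Pi.single a 1 : Fin d → ℕ) b ≤ c b := Pi.single_one_le_of_pos ha b
    omega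

lemma wordWeight_snoc (q : ℝ) (μ : Fin d → ℕ) (v : Fin n → Fin d) (a : Fin d) :
    wordWeight q μ (Fin.snoc v a : Fin (n + 1) → Fin d) =
      wordWeight q μ v * q ^ (∑ b ∈ univ.filter (fun b => a < b), (μ b + letterCount v b)) := by
  simp only [wordWeight, letterCount, Fin.prod_univ_castSucc, Fin.snoc_castSucc, Fin.snoc_last,
    card_filter, Fin.sum_univ_castSucc, Fin.castSucc_lt_castSucc_iff, Fin.castSucc_lt_last,
    (Fin.castSucc_lt_last _).asymm, lt_irrefl, false_and, if_false, add_zero, true_and]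

lemma wordSum_succ (q : ℝ) (μ c : Fin d → ℕ) :
    wordSum q μ (n + 1) c = ∑ a ∈ univ.filter (fun a => 0 < c a),
      q ^ (∑ b ∈ univ.filter (fun b => a < b), (μ b + c b)) *
        wordSum q μ n (c - Pi.single a 1) := by
  have hsplit : wordSum q μ (n + 1) c =
      ∑ p ∈ (univ.filter (fun a => 0 < c a)).sigma (fun a => words n (c - Pi.single a 1)),
        wordWeight q μ (Fin.snoc p.2 p.1 : Fin (n + 1) → Fin d) := by
    refine sum_nbij' (fun u => ⟨u (Fin.last n), Fin.init u⟩) (fun p => Fin.snoc p.2 p.1)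
      ?_ ?_ (fun u _ => Fin.snoc_init_self u) (fun p _ => by simp) (fun u _ => by simp)
    · intro u hu
      rw [← Fin.snoc_init_self u, snoc_mem_words_iff] at hu
      simpa using hu
    · rintro ⟨a, v⟩ hp
      rw [mem_sigma, mem_filter] at hp
      exact (snoc_mem_words_iff v a c).2 ⟨hp.1.2, hp.2⟩
  rw [hsplit, sum_sigma]
  refine sum_congr rfl fun a _ => ?_
  rw [wordSum, mul_sum]
  refine sum_congr rfl fun v hv => ?_
  rw [wordWeight_snoc, mul_comm]
  congr 2
  refine sum_congr rfl fun b hb => ?_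
  have hba : b ≠ a := (mem_filter.1 hb).2.ne'
  simp only [words, mem_filter] at hv
  simp [hv.2 b, hba]

lemma wordWeight_zero (q : ℝ) (u : Fin n → Fin d) : wordWeight q 0 u = q ^ inversions u := by
  rw [wordWeight, prod_pow_eq_pow_sum, inversions, card_filter, Fintype.sum_prod_type, sum_comm]
  refine congrArg _ (sum_congr rfl fun j _ => ?_)
  simp only [Pi.zero_apply, zero_add, card_filter]
  rw [sum_comm]
  refine sum_congr rfl fun i _ => ?_
  by_cases hij : i < j
  · simp [hij, sum_ite_eq]
  · simp [hij]

end Words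

section Exponents

lemma crossExponent_add (μ c c' : Fin d → ℕ) :
    crossExponent μ (c + c') = crossExponent μ c + crossExponent μ c' := by
  simp only [crossExponent, Pi.add_apply, add_mul, sum_add_distrib]

lemma crossExponent_single (μ : Fin d → ℕ) (a : Fin d) :
    crossExponent μ (Pi.single a 1) = ∑ b ∈ univ.filter (fun b => a < b), μ b := by
  rw [crossExponent, sum_filter, Fintype.sum_prod_type, sum_eq_single a, sum_filter]
  · simp
  · intro b _ hb
    simp [hb]
  · simp

lemma tailSum_zero (c : Fin d → ℕ) : tailSum c 0 = ∑ a, c a := by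
  simp [tailSum]

lemma tailSum_dim (c : Fin d → ℕ) : tailSum c d = 0 := by
  simp [tailSum, Fin.is_lt]

lemma tailSum_eq_add (c : Fin d → ℕ) (a : Fin d) : tailSum c a = c a + tailSum c (a + 1) := by
  have : univ.filter (fun b : Fin d => (a : ℕ) ≤ b) =
      insert a (univ.filter (fun b : Fin d => (a : ℕ) + 1 ≤ b)) := by
    ext b
    simp only [mem_filter, mem_univ, true_and, mem_insert, Fin.ext_iff]
    omega
  rw [tailSum, this, sum_insert (by simp), tailSum]

lemma sum_pow_tailSum_sub (q : ℝ) (c : Fin d → ℕ) :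
    ∑ a : Fin d, (q ^ tailSum c (a + 1) - q ^ tailSum c a) = 1 - q ^ ∑ a, c a := by
  rw [Fin.sum_univ_eq_sum_range (fun i => q ^ tailSum c (i + 1) - q ^ tailSum c i),
    sum_range_sub (fun i => q ^ tailSum c i), tailSum_dim, tailSum_zero, pow_zero]

end Exponents

lemma prod_qPoch_eq_mul {c : Fin d → ℕ} {a : Fin d} (q : ℝ) (ha : 0 < c a) :
    ∏ b, qPoch q (c b) = (1 - q ^ c a) * ∏ b, qPoch q ((c - Pi.single a 1 : Fin d → ℕ) b) := by
  simp only [Pi.sub_apply]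
  rw [← mul_prod_erase univ (fun b => qPoch q (c b)) (mem_univ a),
    ← mul_prod_erase univ (fun b => qPoch q (c b - (Pi.single a 1 : Fin d → ℕ) b)) (mem_univ a),
    prod_congr rfl fun b hb => show qPoch q (c b - (Pi.single a 1 : Fin d → ℕ) b) = qPoch q (c b) by
      rw [Pi.single_eq_of_ne (ne_of_mem_erase hb), Nat.sub_zero]]
  obtain ⟨m, hm⟩ := Nat.exists_eq_add_one.2 ha
  simp only [Pi.single_eq_same, hm, Nat.add_sub_cancel, qPoch_succ]
  ring

/-- The `a`-th term of `wordSum_succ`; these terms telescope. -/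
lemma prod_qPoch_mul_pow_mul_wordSum {n : ℕ} (q : ℝ) (μ : Fin d → ℕ) {c : Fin d → ℕ} {a : Fin d}
    (ha : 0 < c a)
    (ih : (∏ b, qPoch q ((c - Pi.single a 1 : Fin d → ℕ) b)) * wordSum q μ n (c - Pi.single a 1) =
      q ^ crossExponent μ (c - Pi.single a 1) * qPoch q n) :
    (∏ b, qPoch q (c b)) *
        (q ^ (∑ b ∈ univ.filter (fun b => a < b), (μ b + c b)) *
          wordSum q μ n (c - Pi.single a 1)) =
      q ^ crossExponent μ c * (q ^ tailSum c (a + 1) - q ^ tailSum c a) * qPoch q n := by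
  have hexp : crossExponent μ c =
      crossExponent μ (c - Pi.single a 1) + ∑ b ∈ univ.filter (fun b => a < b), μ b := by
    conv_lhs => rw [← tsub_add_cancel_of_le (Pi.single_one_le_of_pos ha)]
    rw [crossExponent_add, crossExponent_single]
  have htail : ∑ b ∈ univ.filter (fun b => a < b), (μ b + c b) =
      ∑ b ∈ univ.filter (fun b => a < b), μ b + tailSum c (a + 1) :=
    sum_add_distrib
  rw [prod_qPoch_eq_mul q ha, htail, hexp, tailSum_eq_add c a]
  simp only [pow_add]
  linear_combination (1 - q ^ c a) * q ^ (∑ b ∈ univ.filter (fun b => a < b), μ b) *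
    q ^ tailSum c (a + 1) * ih

theorem prod_qPoch_mul_wordSum (q : ℝ) (μ : Fin d → ℕ) (n : ℕ) (c : Fin d → ℕ)
    (hc : ∑ a, c a = n) :
    (∏ a, qPoch q (c a)) * wordSum q μ n c = q ^ crossExponent μ c * qPoch q n := by
  induction n generalizing c with
  | zero =>
    obtain rfl : c = 0 := funext fun a => sum_eq_zero_iff.1 hc a (mem_univ a)
    simp [wordSum, words, letterCount, wordWeight, crossExponent, qPoch]
  | succ n ih =>
    calc (∏ a, qPoch q (c a)) * wordSum q μ (n + 1) c
        = ∑ a ∈ univ.filter (fun a => 0 < c a),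
            q ^ crossExponent μ c * (q ^ tailSum c (a + 1) - q ^ tailSum c a) * qPoch q n := by
          rw [wordSum_succ, mul_sum]
          refine sum_congr rfl fun a ha => prod_qPoch_mul_pow_mul_wordSum q μ (mem_filter.1 ha).2 ?_
          exact ih _ (by rw [sum_sub_single_one (mem_filter.1 ha).2, hc, Nat.add_sub_cancel])
      _ = ∑ a : Fin d,
            q ^ crossExponent μ c * (q ^ tailSum c (a + 1) - q ^ tailSum c a) * qPoch q n := by
          refine sum_filter_of_ne fun a _ h => Nat.pos_of_ne_zero fun hca => h ?_
          simp [tailSum_eq_add c a, hca]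
      _ = q ^ crossExponent μ c * qPoch q (n + 1) := by
          rw [← sum_mul, ← mul_sum, sum_pow_tailSum_sub, hc, qPoch_succ]
          ring

theorem prod_qPoch_mul_wordSum_sub (q : ℝ) {μ lam : Fin d → ℕ} (hle : μ ≤ lam) :
    (∏ a, qPoch q (lam a - μ a)) * wordSum q μ (∑ a, lam a - ∑ a, μ a) (lam - μ) =
      q ^ ((crossExponent μ lam : ℤ) - crossExponent μ μ) * qPoch q (∑ a, lam a - ∑ a, μ a) := by
  have hexp : (crossExponent μ lam : ℤ) - crossExponent μ μ = crossExponent μ (lam - μ) := by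
    conv_lhs => rw [← tsub_add_cancel_of_le hle, crossExponent_add]
    push_cast
    ring
  rw [hexp, zpow_natCast]
  exact prod_qPoch_mul_wordSum q μ _ (lam - μ) (sum_tsub_distrib _ fun a _ => hle a)

theorem prod_qPoch_mul_sum_pow_inversions (q : ℝ) (lam : Fin d → ℕ) :
    (∏ a, qPoch q (lam a)) * ∑ u ∈ words (∑ a, lam a) lam, q ^ inversions u =
      qPoch q (∑ a, lam a) := by
  simpa [crossExponent, wordSum, wordWeight_zero] using prod_qPoch_mul_wordSum q 0 _ lam rfl

end QPascal

theorem stmt_14_general (q : ℝ) (d : ℕ)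
    (μ lam : Fin d → ℕ) (hle : ∀ a, μ a ≤ lam a) :
    ((∏ a, qPoch q (lam a - μ a)) *
        ∑ u ∈ Finset.univ.filter
          (fun u : Fin ((∑ a, lam a) - (∑ a, μ a)) → Fin d =>
            ∀ a, (Finset.univ.filter (fun j => u j = a)).card = lam a - μ a),
          ∏ j, q ^ (∑ b ∈ Finset.univ.filter (fun b => u j < b),
            (μ b + (Finset.univ.filter (fun i => i < j ∧ u i = b)).card)) =
      q ^ (((∑ p ∈ Finset.univ.filter (fun p : Fin d × Fin d => p.1 < p.2),
              lam p.1 * μ p.2 : ℕ) : ℤ) -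
            ((∑ p ∈ Finset.univ.filter (fun p : Fin d × Fin d => p.1 < p.2),
              μ p.1 * μ p.2 : ℕ) : ℤ)) *
        qPoch q ((∑ a, lam a) - (∑ a, μ a))) ∧
    ((∏ a, qPoch q (lam a)) *
        ∑ u ∈ Finset.univ.filter
          (fun u : Fin (∑ a, lam a) → Fin d =>
            ∀ a, (Finset.univ.filter (fun j => u j = a)).card = lam a),
          q ^ ((Finset.univ.filter
            (fun p : Fin (∑ a, lam a) × Fin (∑ a, lam a) =>
              p.1 < p.2 ∧ u p.2 < u p.1)).card) =
      qPoch q (∑ a, lam a)) :=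
  ⟨QPascal.prod_qPoch_mul_wordSum_sub q hle, QPascal.prod_qPoch_mul_sum_pow_inversions q lam⟩

/-- path counting in the `q`-Pascal pyramid.  For `μ ≤ λ` in `ℕ^d` with
`m = |μ|`, `n = |λ|`, the sum over all words `u` of length `n - m` in the alphabet
`{1, …, d}` (here `Fin d`) with exactly `λ_a - μ_a` occurrences of each letter `a` of the
weights `∏_j q^{Σ_{b > u_j} (μ_b + #{i < j : u_i = b})}` equals
`q^{N(μ,λ)} (q; q)_{n-m} / ∏_a (q; q)_{λ_a - μ_a}`, where
`N(μ,λ) = Σ_{b<a} λ_b μ_a - Σ_{b<a} μ_b μ_a` (stated in cross-multiplied form, valid for all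
`q > 0`).  In particular (second conjunct), for `μ = 0` one gets MacMahon's formula:
`Σ_u q^{inv u} = (q; q)_n / ∏_a (q; q)_{λ_a}` over words with letter multiplicities `λ`. -/
theorem stmt_14 (q : ℝ) (hq : 0 < q) (d : ℕ) (hd : 1 ≤ d)
    (μ lam : Fin d → ℕ) (hle : ∀ a, μ a ≤ lam a) :
    ((∏ a, qPoch q (lam a - μ a)) *
        ∑ u ∈ Finset.univ.filter
          (fun u : Fin ((∑ a, lam a) - (∑ a, μ a)) → Fin d =>
            ∀ a, (Finset.univ.filter (fun j => u j = a)).card = lam a - μ a),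
          ∏ j, q ^ (∑ b ∈ Finset.univ.filter (fun b => u j < b),
            (μ b + (Finset.univ.filter (fun i => i < j ∧ u i = b)).card)) =
      q ^ (((∑ p ∈ Finset.univ.filter (fun p : Fin d × Fin d => p.1 < p.2),
              lam p.1 * μ p.2 : ℕ) : ℤ) -
            ((∑ p ∈ Finset.univ.filter (fun p : Fin d × Fin d => p.1 < p.2),
              μ p.1 * μ p.2 : ℕ) : ℤ)) *
        qPoch q ((∑ a, lam a) - (∑ a, μ a))) ∧
    ((∏ a, qPoch q (lam a)) *
        ∑ u ∈ Finset.univ.filter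
          (fun u : Fin (∑ a, lam a) → Fin d =>
            ∀ a, (Finset.univ.filter (fun j => u j = a)).card = lam a),
          q ^ ((Finset.univ.filter
            (fun p : Fin (∑ a, lam a) × Fin (∑ a, lam a) =>
              p.1 < p.2 ∧ u p.2 < u p.1)).card) =
      qPoch q (∑ a, lam a)) :=
  stmt_14_general q d μ lam hle
end
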